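/- Let f_0, ..., f_m : H → ℂ be functions on the upper half-plane, each admitting a convergent q-expansion f_i(τ) = Σ_{n≥0} a_i(n) q^{n/N} (q = e^{2πiτ}), and suppose the function τ ↦ Σ_{i=0}^m f_i(τ) (E_2(τ) - 1/log q)^i also admits a q-expansion Σ_n b(n) q^{n/N}, where 1/log q = 1/(2πiτ) and E_2 has a q-expansion. Then f_i = 0 for all i > 0 (equivalently: a function which is both a polynomial in 1/τ with q-expansion coefficients and periodic with a q-expansion must be constant in 1/τ). -/

import Mathlib

open Complex

/-- `g` admits a convergent q-expansion `g(τ) = Σ_{n ≥ 0} a(n) q^{n/N}` with `q = e^{2πiτ}`. -/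
def HasQExpansion (N : ℕ) (g : UpperHalfPlane → ℂ) : Prop :=
  ∃ a : ℕ → ℂ, ∀ τ : UpperHalfPlane,
    HasSum (fun n : ℕ => a n * Complex.exp (2 * Real.pi * Complex.I * n * τ / N)) (g τ)

private lemma exp_shift (N : ℕ) (hN : 0 < N) (n k : ℕ) (τ : UpperHalfPlane) :
    Complex.exp (2 * Real.pi * Complex.I * n * ((((k * N : ℕ) : ℝ) +ᵥ τ : UpperHalfPlane) : ℂ) / N)
      = Complex.exp (2 * Real.pi * Complex.I * n * τ / N) := by
  have hNc : (N : ℂ) ≠ 0 := Nat.cast_ne_zero.mpr hN.ne'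
  have hco : ((((k * N : ℕ) : ℝ) +ᵥ τ : UpperHalfPlane) : ℂ) = (k * N : ℂ) + τ := by
    rw [UpperHalfPlane.coe_vadd]; push_cast; ring
  rw [hco]
  have key : 2 * (Real.pi : ℂ) * Complex.I * n * ((k * N : ℂ) + τ) / N
      = 2 * Real.pi * Complex.I * n * τ / N + ((n * k : ℤ) : ℂ) * (2 * Real.pi * Complex.I) := by
    field_simp
    push_cast
    ring
  rw [key, Complex.exp_add, Complex.exp_int_mul_two_pi_mul_I, mul_one]

private lemma qexp_periodic {N : ℕ} (hN : 0 < N) {g : UpperHalfPlane → ℂ}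
    (hg : HasQExpansion N g) (τ : UpperHalfPlane) (k : ℕ) :
    g (((k * N : ℕ) : ℝ) +ᵥ τ) = g τ := by
  obtain ⟨a, ha⟩ := hg
  have h1 := ha (((k * N : ℕ) : ℝ) +ᵥ τ)
  have h1' : HasSum (fun n : ℕ => a n * Complex.exp (2 * Real.pi * Complex.I * n * τ / N))
      (g (((k * N : ℕ) : ℝ) +ᵥ τ)) := by
    refine HasSum.congr_fun h1 fun n => ?_
    rw [exp_shift N hN n k τ]
  exact h1'.unique (ha τ)

theorem stmt12 (N : ℕ) (hN : 0 < N) (m : ℕ) (f : ℕ → UpperHalfPlane → ℂ)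
    (E2 : UpperHalfPlane → ℂ)
    (hf : ∀ i ≤ m, HasQExpansion N (f i))
    (hE2 : HasQExpansion 1 E2)
    (h : HasQExpansion N (fun τ =>
      ∑ i ∈ Finset.range (m + 1),
        f i τ * (E2 τ - 1 / (2 * Real.pi * Complex.I * τ)) ^ i)) :
    ∀ i, 1 ≤ i → i ≤ m → f i = 0 := by
  intro i hi1 him
  funext τ
  classical
  set G : UpperHalfPlane → ℂ := fun τ =>
    ∑ j ∈ Finset.range (m + 1),
      f j τ * (E2 τ - 1 / (2 * Real.pi * Complex.I * τ)) ^ j with hG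
  -- shifted points
  set τk : ℕ → UpperHalfPlane := fun k => ((k * N : ℕ) : ℝ) +ᵥ τ with hτk
  have hcoe : ∀ k : ℕ, ((τk k : UpperHalfPlane) : ℂ) = (k * N : ℂ) + τ := by
    intro k; rw [hτk]; rw [UpperHalfPlane.coe_vadd]; push_cast; ring
  have hfper : ∀ j ≤ m, ∀ k : ℕ, f j (τk k) = f j τ := fun j hj k =>
    qexp_periodic hN (hf j hj) τ k
  have hE2per : ∀ k : ℕ, E2 (τk k) = E2 τ := by
    intro k
    have := qexp_periodic (N := 1) one_pos hE2 τ (k * N)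
    simpa [hτk, mul_one] using this
  have hGper : ∀ k : ℕ, G (τk k) = G τ := fun k => qexp_periodic hN h τ k
  -- the polynomial
  set x : ℕ → ℂ := fun k => E2 τ - 1 / (2 * Real.pi * Complex.I * ((τk k : UpperHalfPlane) : ℂ))
    with hx
  set p : Polynomial ℂ := ∑ j ∈ Finset.range (m + 1), Polynomial.C (f j τ) * Polynomial.X ^ j
    with hp
  set q : Polynomial ℂ := p - Polynomial.C (G τ) with hq
  have hAne : ∀ k : ℕ, (2 * (Real.pi : ℂ) * Complex.I * ((τk k : UpperHalfPlane) : ℂ)) ≠ 0 := by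
    intro k
    apply mul_ne_zero
    · simp [Real.pi_ne_zero, Complex.I_ne_zero, Complex.ofReal_ne_zero]
    · exact UpperHalfPlane.ne_zero (τk k)
  have hroot : ∀ k : ℕ, q.IsRoot (x k) := by
    intro k
    have heval : p.eval (x k) = G (τk k) := by
      rw [hp, hG]
      simp only [Polynomial.eval_finset_sum, Polynomial.eval_mul, Polynomial.eval_C,
        Polynomial.eval_pow, Polynomial.eval_X]
      refine Finset.sum_congr rfl fun j hj => ?_
      rw [hfper j (Nat.lt_succ_iff.mp (Finset.mem_range.mp hj)) k, hE2per k, hx]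
    simp only [Polynomial.IsRoot, hq, Polynomial.eval_sub, Polynomial.eval_C, heval, hGper k,
      sub_self]
  have hinj : Function.Injective x := by
    intro k k' hkk
    have h1 : 1 / (2 * (Real.pi : ℂ) * Complex.I * ((τk k : UpperHalfPlane) : ℂ))
        = 1 / (2 * (Real.pi : ℂ) * Complex.I * ((τk k' : UpperHalfPlane) : ℂ)) := by
      have h := hkk
      simp only [hx] at h
      linear_combination -h
    have h2 : (2 * (Real.pi : ℂ) * Complex.I * ((τk k : UpperHalfPlane) : ℂ))
        = (2 * (Real.pi : ℂ) * Complex.I * ((τk k' : UpperHalfPlane) : ℂ)) := by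
      rw [one_div, one_div] at h1
      exact inv_injective h1
    have h3 : ((τk k : UpperHalfPlane) : ℂ) = ((τk k' : UpperHalfPlane) : ℂ) :=
      mul_left_cancel₀ (by simp [Real.pi_ne_zero, Complex.I_ne_zero]) h2
    rw [hcoe, hcoe] at h3
    have h4 : (k * N : ℂ) = (k' * N : ℂ) := add_right_cancel h3
    have hNc : (N : ℂ) ≠ 0 := Nat.cast_ne_zero.mpr hN.ne'
    have h5 : (k : ℂ) = k' := mul_right_cancel₀ hNc h4
    exact_mod_cast h5
  have hq0 : q = 0 := by
    apply Polynomial.eq_zero_of_infinite_isRoot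
    exact Set.infinite_of_injective_forall_mem hinj hroot
  have hcoeff : q.coeff i = 0 := by rw [hq0]; simp
  rw [hq, Polynomial.coeff_sub, Polynomial.coeff_C, if_neg (by omega : ¬ i = 0)] at hcoeff
  have hpcoeff : p.coeff i = f i τ := by
    rw [hp, Polynomial.finset_sum_coeff]
    rw [Finset.sum_eq_single i]
    · simp
    · intro j hj hji
      simp [Polynomial.coeff_C_mul, Polynomial.coeff_X_pow, Ne.symm hji]
    · intro hi
      exact absurd (Finset.mem_range.mpr (Nat.lt_succ_of_le him)) hi
  simp only [hpcoeff, sub_zero] at hcoeff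
  simpa using hcoeff
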